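/- arXiv:2205.15494 — 2 statements merged into one kernel-verified Lean document; each statement's English description precedes it below -/
import Mathlib

section
/- Let P be a distribution on X × [C] with p_{s,y} := Pr_P[X_s = s, Y = y] > 0 for all s, y, and let Q be a fair base rate distribution with H(P,Q) ≤ ρ whose subpopulation conditionals satisfy Q_{s,y} = P_{s,y} for all s ∈ [S], y ∈ [C]. Define k_s := Pr_Q[X_s = s] and r_y := Pr_Q[Y = y]. Then: (i) Pr_Q[X_s = s, Y = y] = k_s r_y for all s, y; (ii) k_s ≥ 0, r_y ≥ 0, Σ_s k_s = 1, Σ_y r_y = 1; (iii) Σ_{s,y} √(p_{s,y} k_s r_y) ≥ 1 − ρ²; and (iv) E_{(X,Y)∼Q}[ℓ(h(X),Y)] = Σ_{s,y} k_s r_y E_{s,y} where E_{s,y} := E_{(X,Y)∼P_{s,y}}[ℓ(h(X),Y)] for any classifier h and nonnegative loss ℓ. -/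
open MeasureTheory ProbabilityTheory

/-- The Hellinger distance `H(P,Q) = sqrt((1/2) ∫ (√p − √q)² dμ)`, computed with the
reference measure `μ := P + Q` (both `P` and `Q` are absolutely continuous with respect to
`P + Q`, and the Hellinger distance does not depend on the choice of reference measure). -/
noncomputable def hellinger {Z : Type*} [MeasurableSpace Z] (P Q : Measure Z) : ℝ :=
  Real.sqrt ((1 / 2) * ∫ z,
    (Real.sqrt ((P.rnDeriv (P + Q) z).toReal) - Real.sqrt ((Q.rnDeriv (P + Q) z).toReal)) ^ 2
      ∂(P + Q))

/-- The subpopulation `{(x, y') : x_s = s, y' = y}` of the sample space `X × Fin C`,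
determined by the sensitive attribute map `xs` and the label `y`. -/
def subpop {X : Type*} {S C : ℕ} (xs : X → Fin S) (s : Fin S) (y : Fin C) :
    Set (X × Fin C) := {p | xs p.1 = s ∧ p.2 = y}

/-- `Q` is a fair base rate distribution: for every label `y ∈ [C]`, the base rate
`b^Q_{s,y} = Pr_Q[Y = y | X_s = s]` is equal across all sensitive groups `s ∈ [S]`. -/
def IsFairBaseRate {X : Type*} [MeasurableSpace X] {S C : ℕ} (xs : X → Fin S)
    (Q : Measure (X × Fin C)) : Prop :=
  ∀ (y : Fin C) (i j : Fin S),
    (Q[|{p | xs p.1 = i}]) {p | p.2 = y} = (Q[|{p | xs p.1 = j}]) {p | p.2 = y}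

/-!
Fairness says that `c_y = Q(Y = y | X_s = s)` does not depend on `s`; the law of total
probability over the groups then gives `c_y = Q(Y = y)`, which is (i). Since `1 - H(P,Q)²` is the
affinity `∫ √(pq)`, it splits over the cells `{X_s = s, Y = y}`, and Cauchy–Schwarz bounds the
piece on a cell by `√(P(cell) Q(cell))` with `Q(cell) = k_s r_y`, which is (iii). Part (iv) is the
law of total expectation over the same cells, using `Q_{s,y} = P_{s,y}`.
-/

section Fibers

variable {Z ι : Type*} [MeasurableSpace Z] [Fintype ι] [MeasurableSpace ι]
  [MeasurableSingletonClass ι] {μ : Measure Z} {a : Z → ι}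

theorem sum_measureReal_preimage_singleton_eq_one [IsProbabilityMeasure μ] (ha : Measurable a) :
    ∑ i, μ.real (a ⁻¹' {i}) = 1 := by
  rw [sum_measureReal_preimage_singleton _ fun i _ => ha (measurableSet_singleton i),
    Finset.coe_univ, Set.preimage_univ, probReal_univ]

theorem measure_preimage_singleton_inter_eq_mul_of_cond_eq [IsProbabilityMeasure μ]
    (ha : Measurable a) {B : Set Z} (hB : ∀ i j, μ[B | a ⁻¹' {i}] = μ[B | a ⁻¹' {j}]) (i : ι) :
    μ (a ⁻¹' {i} ∩ B) = μ (a ⁻¹' {i}) * μ B := by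
  have hinter : ∀ j, μ (a ⁻¹' {j} ∩ B) = μ[B | a ⁻¹' {i}] * μ (a ⁻¹' {j}) := fun j => by
    rw [hB i j, cond_mul_eq_inter (ha (measurableSet_singleton j))]
  have htotal : μ B = μ[B | a ⁻¹' {i}] := calc
    μ B = ∑ j, μ (a ⁻¹' {j} ∩ B) := by
      simp_rw [← Measure.restrict_apply (ha (measurableSet_singleton _))]
      rw [sum_measure_preimage_singleton _ fun j _ => ha (measurableSet_singleton j),
        Finset.coe_univ, Set.preimage_univ, Measure.restrict_apply_univ]
    _ = μ[B | a ⁻¹' {i}] := by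
      simp_rw [hinter, ← Finset.mul_sum]
      rw [sum_measure_preimage_singleton _ fun j _ => ha (measurableSet_singleton j),
        Finset.coe_univ, Set.preimage_univ, measure_univ, mul_one]
  rw [hinter, htotal, mul_comm]

theorem integral_eq_sum_setIntegral_preimage_singleton (ha : Measurable a) {ψ : Z → ℝ}
    (hψ : Integrable ψ μ) : ∫ z, ψ z ∂μ = ∑ i, ∫ z in a ⁻¹' {i}, ψ z ∂μ := by
  have hcover : (⋃ i, a ⁻¹' {i}) = Set.univ := by ext; simp
  rw [← integral_iUnion_fintype (fun i => ha (measurableSet_singleton i))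
    (pairwise_disjoint_fiber a) fun i => hψ.integrableOn, hcover, setIntegral_univ]

theorem measureReal_mul_integral_cond [IsFiniteMeasure μ] (s : Set Z) (ψ : Z → ℝ) :
    μ.real s * ∫ z, ψ z ∂μ[|s] = ∫ z in s, ψ z ∂μ := by
  rw [ProbabilityTheory.cond, integral_smul_measure, ENNReal.toReal_inv, smul_eq_mul, ← mul_assoc,
    measureReal_def]
  rcases eq_or_ne (μ s) 0 with hs | hs
  · rw [Measure.restrict_eq_zero.mpr hs, integral_zero_measure, mul_zero]
  · rw [mul_inv_cancel₀ (ENNReal.toReal_ne_zero.mpr ⟨hs, measure_ne_top μ s⟩), one_mul]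

theorem integral_eq_sum_measureReal_mul_integral_cond [IsFiniteMeasure μ] (ha : Measurable a)
    {ψ : Z → ℝ} (hψ : Integrable ψ μ) :
    ∫ z, ψ z ∂μ = ∑ i, μ.real (a ⁻¹' {i}) * ∫ z, ψ z ∂μ[|a ⁻¹' {i}] := by
  simp_rw [measureReal_mul_integral_cond]
  exact integral_eq_sum_setIntegral_preimage_singleton ha hψ

end Fibers

section SqrtIntegral

variable {Z : Type*} [MeasurableSpace Z] {μ : Measure Z} {f g : Z → ℝ}

theorem MeasureTheory.Integrable.memLp_two_sqrt (hf : Integrable f μ) (hf0 : ∀ z, 0 ≤ f z) :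
    MemLp (fun z => Real.sqrt (f z)) 2 μ :=
  (memLp_two_iff_integrable_sq hf.aemeasurable.sqrt.aestronglyMeasurable).mpr
    (hf.congr (ae_of_all _ fun z => (Real.sq_sqrt (hf0 z)).symm))

theorem integrable_sqrt_mul_sqrt (hf0 : ∀ z, 0 ≤ f z) (hg0 : ∀ z, 0 ≤ g z)
    (hf : Integrable f μ) (hg : Integrable g μ) :
    Integrable (fun z => Real.sqrt (f z) * Real.sqrt (g z)) μ :=
  (hf.memLp_two_sqrt hf0).integrable_mul (hg.memLp_two_sqrt hg0)

theorem integral_sqrt_mul_sqrt_le (hf0 : ∀ z, 0 ≤ f z) (hg0 : ∀ z, 0 ≤ g z)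
    (hf : Integrable f μ) (hg : Integrable g μ) :
    ∫ z, Real.sqrt (f z) * Real.sqrt (g z) ∂μ ≤ Real.sqrt ((∫ z, f z ∂μ) * ∫ z, g z ∂μ) := by
  have hsq : ∀ {u : Z → ℝ}, (∀ z, 0 ≤ u z) →
      ∫ z, Real.sqrt (u z) ^ (2 : ℝ) ∂μ = ∫ z, u z ∂μ := fun hu0 =>
    integral_congr_ae <| ae_of_all _ fun z => by
      dsimp only; rw [Real.rpow_two, Real.sq_sqrt (hu0 z)]
  have holder := integral_mul_le_Lp_mul_Lq_of_nonneg Real.HolderConjugate.two_two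
    (ae_of_all μ fun z => Real.sqrt_nonneg (f z)) (ae_of_all μ fun z => Real.sqrt_nonneg (g z))
    (by simpa using hf.memLp_two_sqrt hf0) (by simpa using hg.memLp_two_sqrt hg0)
  rwa [hsq hf0, hsq hg0, ← Real.sqrt_eq_rpow, ← Real.sqrt_eq_rpow,
    ← Real.sqrt_mul (integral_nonneg hf0)] at holder

theorem integral_sqrt_sub_sqrt_sq (hf0 : ∀ z, 0 ≤ f z) (hg0 : ∀ z, 0 ≤ g z)
    (hf : Integrable f μ) (hg : Integrable g μ) :
    ∫ z, (Real.sqrt (f z) - Real.sqrt (g z)) ^ 2 ∂μ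
      = ∫ z, f z ∂μ + ∫ z, g z ∂μ - 2 * ∫ z, Real.sqrt (f z) * Real.sqrt (g z) ∂μ := by
  have hexpand : ∀ z, (Real.sqrt (f z) - Real.sqrt (g z)) ^ 2
      = f z + g z - 2 * (Real.sqrt (f z) * Real.sqrt (g z)) := fun z => by
    rw [sub_sq, Real.sq_sqrt (hf0 z), Real.sq_sqrt (hg0 z)]; ring
  simp_rw [hexpand]
  rw [integral_sub (f := fun z => f z + g z) (hf.add hg)
      ((integrable_sqrt_mul_sqrt hf0 hg0 hf hg).const_mul 2),
    integral_add hf hg, integral_const_mul]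

end SqrtIntegral

section Hellinger

variable {Z : Type*} [MeasurableSpace Z]

noncomputable def hellingerAffinity (P Q : Measure Z) : ℝ :=
  ∫ z, Real.sqrt ((P.rnDeriv (P + Q) z).toReal) * Real.sqrt ((Q.rnDeriv (P + Q) z).toReal)
    ∂(P + Q)

variable (P Q : Measure Z) [IsProbabilityMeasure P] [IsProbabilityMeasure Q]

theorem hellinger_sq_eq_one_sub_hellingerAffinity :
    hellinger P Q ^ 2 = 1 - hellingerAffinity P Q := by
  have hP : P ≪ P + Q := Measure.AbsolutelyContinuous.rfl.add_right Q
  have hQ : Q ≪ P + Q := Measure.AbsolutelyContinuous.rfl.add_right' P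
  have hexpand := integral_sqrt_sub_sqrt_sq (fun _ => ENNReal.toReal_nonneg)
    (fun _ => ENNReal.toReal_nonneg) (Measure.integrable_toReal_rnDeriv (μ := P) (ν := P + Q))
    (Measure.integrable_toReal_rnDeriv (μ := Q) (ν := P + Q))
  rw [Measure.integral_toReal_rnDeriv hP, Measure.integral_toReal_rnDeriv hQ, probReal_univ,
    probReal_univ] at hexpand
  rw [hellinger, Real.sq_sqrt (mul_nonneg (by norm_num) (integral_nonneg fun _ => sq_nonneg _)),
    hexpand, hellingerAffinity]
  ring

theorem hellingerAffinity_le_sum_sqrt {ι : Type*} [Fintype ι] [MeasurableSpace ι]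
    [MeasurableSingletonClass ι] {a : Z → ι} (ha : Measurable a) :
    hellingerAffinity P Q ≤ ∑ i, Real.sqrt (P.real (a ⁻¹' {i}) * Q.real (a ⁻¹' {i})) := by
  have hP : P ≪ P + Q := Measure.AbsolutelyContinuous.rfl.add_right Q
  have hQ : Q ≪ P + Q := Measure.AbsolutelyContinuous.rfl.add_right' P
  have hfP := Measure.integrable_toReal_rnDeriv (μ := P) (ν := P + Q)
  have hfQ := Measure.integrable_toReal_rnDeriv (μ := Q) (ν := P + Q)
  rw [hellingerAffinity, integral_eq_sum_setIntegral_preimage_singleton ha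
    (integrable_sqrt_mul_sqrt (fun _ => ENNReal.toReal_nonneg) (fun _ => ENNReal.toReal_nonneg)
      hfP hfQ)]
  gcongr with i
  rw [← Measure.setIntegral_toReal_rnDeriv hP, ← Measure.setIntegral_toReal_rnDeriv hQ]
  exact integral_sqrt_mul_sqrt_le (fun _ => ENNReal.toReal_nonneg)
    (fun _ => ENNReal.toReal_nonneg) hfP.restrict hfQ.restrict

end Hellinger

theorem subpop_eq_preimage {X : Type*} {S C : ℕ} (xs : X → Fin S) (s : Fin S) (y : Fin C) :
    subpop xs s y = (fun p : X × Fin C => (xs p.1, p.2)) ⁻¹' {(s, y)} := by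
  ext p
  simp [subpop]

theorem statement_5_general {X : Type*} [MeasurableSpace X] {S C : ℕ}
    (xs : X → Fin S) (hxs : Measurable xs)
    (P Q : Measure (X × Fin C)) [IsProbabilityMeasure P] [IsProbabilityMeasure Q]
    (ρ : ℝ)
    (hfair : IsFairBaseRate xs Q)
    (hdist : hellinger P Q ≤ ρ)
    (hcond : ∀ s y, Q[|subpop xs s y] = P[|subpop xs s y]) :
    let k : Fin S → ℝ := fun s => (Q {p | xs p.1 = s}).toReal
    let r : Fin C → ℝ := fun y => (Q {p | p.2 = y}).toReal
    (∀ s y, (Q (subpop xs s y)).toReal = k s * r y) ∧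
    (∀ s, 0 ≤ k s) ∧ (∀ y, 0 ≤ r y) ∧ (∑ s, k s = 1) ∧ (∑ y, r y = 1) ∧
    1 - ρ ^ 2 ≤ ∑ s, ∑ y, Real.sqrt ((P (subpop xs s y)).toReal * k s * r y) ∧
    ∀ (h : X → Fin C), Measurable h → ∀ (ℓ : Fin C → Fin C → ℝ), (∀ a b, 0 ≤ ℓ a b) →
      ∫ p, ℓ (h p.1) p.2 ∂Q =
        ∑ s, ∑ y, k s * r y * ∫ p, ℓ (h p.1) p.2 ∂(P[|subpop xs s y]) := by
  intro k r
  have hgroup : Measurable fun p : X × Fin C => xs p.1 := hxs.comp measurable_fst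
  have hcell : Measurable fun p : X × Fin C => (xs p.1, p.2) := hgroup.prodMk measurable_snd
  have hprod : ∀ s y, (Q (subpop xs s y)).toReal = k s * r y := fun s y => by
    rw [← ENNReal.toReal_mul]
    exact congrArg ENNReal.toReal
      (measure_preimage_singleton_inter_eq_mul_of_cond_eq hgroup (hfair y) s)
  refine ⟨hprod, fun _ => ENNReal.toReal_nonneg, fun _ => ENNReal.toReal_nonneg,
    sum_measureReal_preimage_singleton_eq_one hgroup,
    sum_measureReal_preimage_singleton_eq_one measurable_snd, ?_, ?_⟩
  · calc 1 - ρ ^ 2 ≤ 1 - hellinger P Q ^ 2 := by gcongr; exact Real.sqrt_nonneg _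
      _ = hellingerAffinity P Q := by rw [hellinger_sq_eq_one_sub_hellingerAffinity]; ring
      _ ≤ _ := hellingerAffinity_le_sum_sqrt P Q hcell
      _ = _ := by
        simp only [Fintype.sum_prod_type, ← subpop_eq_preimage, measureReal_def, hprod, mul_assoc]
  · intro h hh ℓ _
    have hloss : Integrable (fun p : X × Fin C => ℓ (h p.1) p.2) Q :=
      (Integrable.of_finite (f := fun c : Fin C × Fin C => ℓ c.1 c.2)).comp_measurable
        ((hh.comp measurable_fst).prodMk measurable_snd)
    rw [integral_eq_sum_measureReal_mul_integral_cond hcell hloss, Fintype.sum_prod_type]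
    simp only [← subpop_eq_preimage, measureReal_def, hprod, hcond]

/-- properties of a feasible shifted distribution under sensitive shifting.
`P` is a probability distribution on `X × Fin C` with all subpopulation probabilities
`p_{s,y} = Pr_P[X_s = s, Y = y]` positive, and `Q` is a fair base rate distribution with
`H(P,Q) ≤ ρ` whose subpopulation conditionals agree with those of `P`.  With
`k_s = Pr_Q[X_s = s]` and `r_y = Pr_Q[Y = y]` we have: (i) `Pr_Q[X_s = s, Y = y] = k_s r_y`;
(ii) `k, r` are nonnegative and sum to one; (iii) `Σ_{s,y} √(p_{s,y} k_s r_y) ≥ 1 − ρ²`;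
(iv) `E_Q[ℓ(h(X),Y)] = Σ_{s,y} k_s r_y E_{s,y}` for any classifier `h` and nonnegative
loss `ℓ`. -/
theorem statement_5 {X : Type*} [MeasurableSpace X] {S C : ℕ}
    (xs : X → Fin S) (hxs : Measurable xs)
    (P Q : Measure (X × Fin C)) [IsProbabilityMeasure P] [IsProbabilityMeasure Q]
    (hpos : ∀ s y, 0 < P (subpop xs s y))
    (ρ : ℝ)
    (hfair : IsFairBaseRate xs Q)
    (hdist : hellinger P Q ≤ ρ)
    (hcond : ∀ s y, Q[|subpop xs s y] = P[|subpop xs s y]) :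
    let k : Fin S → ℝ := fun s => (Q {p | xs p.1 = s}).toReal
    let r : Fin C → ℝ := fun y => (Q {p | p.2 = y}).toReal
    (∀ s y, (Q (subpop xs s y)).toReal = k s * r y) ∧
    (∀ s, 0 ≤ k s) ∧ (∀ y, 0 ≤ r y) ∧ (∑ s, k s = 1) ∧ (∑ y, r y = 1) ∧
    1 - ρ ^ 2 ≤ ∑ s, ∑ y, Real.sqrt ((P (subpop xs s y)).toReal * k s * r y) ∧
    ∀ (h : X → Fin C), Measurable h → ∀ (ℓ : Fin C → Fin C → ℝ), (∀ a b, 0 ≤ ℓ a b) →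
      ∫ p, ℓ (h p.1) p.2 ∂Q =
        ∑ s, ∑ y, k s * r y * ∫ p, ℓ (h p.1) p.2 ∂(P[|subpop xs s y]) :=
  statement_5_general xs hxs P Q ρ hfair hdist hcond
end

section
/- (Tight fairness certificate under general shifting.) Let P be a distribution on X × [C] with p_{s,y} := Pr_P[X_s = s, Y = y] > 0 for all s, y, h a classifier, and ℓ a nonnegative loss. For any ρ > 0, the supremum of E_{(X,Y)∼Q}[ℓ(h(X),Y)] over all fair base rate distributions Q with H(P,Q) ≤ ρ equals the supremum of Σ_{s=1}^S Σ_{y=1}^C k_s r_y E_{(X,Y)∼Q_{s,y}}[ℓ(h(X),Y)] over all choices of: k ∈ ℝ^S_{≥0} with Σ_s k_s = 1, r ∈ ℝ^C_{≥0} with Σ_y r_y = 1, probability distributions Q_{s,y} each supported on {(x,y') : x_s = s, y' = y}, and reals ρ_{s,y} ∈ [0,1] satisfying H(P_{s,y}, Q_{s,y}) ≤ ρ_{s,y} and Σ_{s,y} √(p_{s,y} k_s r_y)(1 − ρ_{s,y}²) ≥ 1 − ρ². -/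
/-!
Decomposing along the subpopulations `{x_s = s, y' = y}`, the Hellinger affinity `1 - H(P,Q)²`
splits as `Σ √(p_{s,y} q_{s,y}) (1 - H(P_{s,y}, Q_{s,y})²)`, and with all group masses positive a
distribution has fair base rates exactly when `q_{s,y} = k_s r_y`, with `k` the group masses and `r`
the label marginal. So every fair `Q` gives a decomposition with the same expected loss, and every
decomposition with all `k_s > 0` is realised by the mixture `Σ k_s r_y Q_{s,y}`. A decomposition
with some `k_{s₀} = 0` is approximated by giving every group weight `ε / S` and letting group `s₀`
follow `P`: the affinity gains `√(p_{s₀,y} ε r_y / S)`, which beats the `O(ε)` lost elsewhere.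
-/

open MeasureTheory ProbabilityTheory

open scoped ENNReal

section Hellinger

variable {Z : Type*} [MeasurableSpace Z]

noncomputable def geomMeanDensity (P Q ν : Measure Z) (z : Z) : ℝ :=
  Real.sqrt ((P.rnDeriv ν z).toReal * (Q.rnDeriv ν z).toReal)

noncomputable def bhattacharyya (P Q : Measure Z) : ℝ :=
  ∫ z, geomMeanDensity P Q (P + Q) z ∂(P + Q)

lemma integrable_geomMeanDensity (P Q ν : Measure Z) [IsFiniteMeasure P] [IsFiniteMeasure Q] :
    Integrable (geomMeanDensity P Q ν) ν := by
  refine ((Measure.integrable_toReal_rnDeriv (μ := P)).add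
    (Measure.integrable_toReal_rnDeriv (μ := Q))).mono
    ((Measure.measurable_rnDeriv P ν).ennreal_toReal.mul
      (Measure.measurable_rnDeriv Q ν).ennreal_toReal).sqrt.aestronglyMeasurable
    (Filter.Eventually.of_forall fun z => ?_)
  have hp : 0 ≤ (P.rnDeriv ν z).toReal := ENNReal.toReal_nonneg
  have hq : 0 ≤ (Q.rnDeriv ν z).toReal := ENNReal.toReal_nonneg
  simp only [geomMeanDensity, Pi.add_apply]
  rw [Real.norm_of_nonneg (Real.sqrt_nonneg _), Real.norm_of_nonneg (add_nonneg hp hq)]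
  exact Real.sqrt_le_iff.mpr ⟨add_nonneg hp hq, by nlinarith⟩

lemma hellinger_nonneg (P Q : Measure Z) : 0 ≤ hellinger P Q := Real.sqrt_nonneg _

@[simp]
lemma hellinger_self (P : Measure Z) : hellinger P P = 0 := by
  simp [hellinger]

lemma hellinger_sq (P Q : Measure Z) [IsProbabilityMeasure P] [IsProbabilityMeasure Q] :
    hellinger P Q ^ 2 = 1 - bhattacharyya P Q := by
  set p := fun z => (P.rnDeriv (P + Q) z).toReal
  set q := fun z => (Q.rnDeriv (P + Q) z).toReal
  have hp : Integrable p (P + Q) := Measure.integrable_toReal_rnDeriv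
  have hq : Integrable q (P + Q) := Measure.integrable_toReal_rnDeriv
  have hsq : ∀ z, (Real.sqrt (p z) - Real.sqrt (q z)) ^ 2
      = p z + q z - 2 * geomMeanDensity P Q (P + Q) z := fun z => by
    rw [sub_sq, Real.sq_sqrt ENNReal.toReal_nonneg, Real.sq_sqrt ENNReal.toReal_nonneg,
      geomMeanDensity, Real.sqrt_mul ENNReal.toReal_nonneg]
    ring
  have hint : ∫ z, (Real.sqrt (p z) - Real.sqrt (q z)) ^ 2 ∂(P + Q)
      = 2 - 2 * bhattacharyya P Q := by
    simp_rw [hsq]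
    rw [integral_sub (f := fun z => p z + q z) (hp.add hq)
        ((integrable_geomMeanDensity P Q _).const_mul 2), integral_add hp hq, integral_const_mul,
      Measure.integral_toReal_rnDeriv (Measure.le_add_right le_rfl).absolutelyContinuous,
      Measure.integral_toReal_rnDeriv (Measure.le_add_left le_rfl).absolutelyContinuous]
    simp [bhattacharyya]
    norm_num
  have hnonneg : 0 ≤ ∫ z, (Real.sqrt (p z) - Real.sqrt (q z)) ^ 2 ∂(P + Q) :=
    integral_nonneg fun z => sq_nonneg _
  rw [hellinger, Real.sq_sqrt (by positivity), hint]
  ring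

lemma hellinger_le_one (P Q : Measure Z) [IsProbabilityMeasure P] [IsProbabilityMeasure Q] :
    hellinger P Q ≤ 1 := by
  have : 0 ≤ bhattacharyya P Q := integral_nonneg fun z => Real.sqrt_nonneg _
  have hsq : hellinger P Q ^ 2 ≤ 1 := by rw [hellinger_sq]; linarith
  exact (sq_le_one_iff₀ (hellinger_nonneg P Q)).mp hsq

lemma bhattacharyya_eq_integral (P Q ν : Measure Z) [IsFiniteMeasure P] [IsFiniteMeasure Q]
    [SigmaFinite ν] (hP : P ≪ ν) (hQ : Q ≪ ν) :
    bhattacharyya P Q = ∫ z, geomMeanDensity P Q ν z ∂ν := by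
  have hP' := Measure.rnDeriv_mul_rnDeriv (κ := ν)
    (Measure.le_add_right le_rfl : P ≤ P + Q).absolutelyContinuous
  have hQ' := Measure.rnDeriv_mul_rnDeriv (κ := ν)
    (Measure.le_add_left le_rfl : Q ≤ P + Q).absolutelyContinuous
  rw [bhattacharyya, ← integral_rnDeriv_smul (hP.add_left hQ)]
  refine integral_congr_ae ?_
  filter_upwards [hP', hQ'] with z hPz hQz
  simp only [geomMeanDensity, ← hPz, ← hQz, Pi.mul_apply, ENNReal.toReal_mul, smul_eq_mul]
  rw [show ∀ a b c : ℝ, a * c * (b * c) = (c * c) * (a * b) from fun a b c => by ring,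
    Real.sqrt_mul (mul_self_nonneg _), Real.sqrt_mul_self ENNReal.toReal_nonneg]

lemma integral_geomMeanDensity_restrict (P Q ν : Measure Z) [IsFiniteMeasure P]
    [IsFiniteMeasure Q] [SigmaFinite ν] {A : Set Z} (hA : MeasurableSet A) :
    ∫ z, geomMeanDensity (P.restrict A) (Q.restrict A) ν z ∂ν
      = ∫ z in A, geomMeanDensity P Q ν z ∂ν := by
  rw [← integral_indicator hA]
  refine integral_congr_ae ?_
  filter_upwards [Measure.rnDeriv_restrict P ν hA, Measure.rnDeriv_restrict Q ν hA]
    with z hPz hQz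
  by_cases hz : z ∈ A <;> simp [geomMeanDensity, hPz, hQz, hz]

lemma integral_geomMeanDensity_smul (P Q ν : Measure Z) [IsFiniteMeasure P]
    [IsFiniteMeasure Q] [SigmaFinite ν] {a b : ℝ≥0∞} (ha : a ≠ ∞) (hb : b ≠ ∞) :
    ∫ z, geomMeanDensity (a • P) (b • Q) ν z ∂ν
      = Real.sqrt (a.toReal * b.toReal) * ∫ z, geomMeanDensity P Q ν z ∂ν := by
  rw [← integral_const_mul]
  refine integral_congr_ae ?_
  filter_upwards [Measure.rnDeriv_smul_left_of_ne_top P ν ha,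
    Measure.rnDeriv_smul_left_of_ne_top Q ν hb] with z hPz hQz
  simp only [geomMeanDensity, hPz, hQz, Pi.smul_apply, smul_eq_mul, ENNReal.toReal_mul]
  rw [← Real.sqrt_mul (by positivity)]
  ring_nf

lemma setIntegral_geomMeanDensity_eq (P Q : Measure Z) [IsFiniteMeasure P] [IsFiniteMeasure Q]
    {A : Set Z} (hA : MeasurableSet A) (P' Q' : Measure Z) [IsFiniteMeasure P']
    [IsFiniteMeasure Q'] (hP : P.restrict A = P A • P') (hQ : Q.restrict A = Q A • Q') :
    ∫ z in A, geomMeanDensity P Q (P + Q) z ∂(P + Q)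
      = Real.sqrt ((P A).toReal * (Q A).toReal) * bhattacharyya P' Q' := by
  rw [← integral_geomMeanDensity_restrict _ _ _ hA, hP, hQ,
    integral_geomMeanDensity_smul _ _ _ (measure_ne_top _ _) (measure_ne_top _ _)]
  rcases eq_or_ne (P A) 0 with hPA | hPA
  · simp [hPA]
  rcases eq_or_ne (Q A) 0 with hQA | hQA
  · simp [hQA]
  have hac : ∀ {μ μ' : Measure Z}, μ A ≠ 0 → μ.restrict A = μ A • μ' → μ' ≪ μ := fun h hμ =>
    (Measure.absolutelyContinuous_smul h).trans
      (hμ ▸ Measure.restrict_le_self.absolutelyContinuous)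
  rw [bhattacharyya_eq_integral P' Q' (P + Q)
    ((hac hPA hP).trans (Measure.le_add_right le_rfl).absolutelyContinuous)
    ((hac hQA hQ).trans (Measure.le_add_left le_rfl).absolutelyContinuous)]

end Hellinger

section Conditioning

variable {Z : Type*} [MeasurableSpace Z]

lemma measure_smul_cond (μ : Measure Z) [IsFiniteMeasure μ] (A : Set Z) :
    μ A • μ[|A] = μ.restrict A := by
  rcases eq_or_ne (μ A) 0 with h | h
  · simp [h, Measure.restrict_eq_zero.mpr h]
  · rw [ProbabilityTheory.cond, smul_smul, ENNReal.mul_inv_cancel h (measure_ne_top _ _),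
      one_smul]

lemma cond_compl_eq_zero (μ : Measure Z) {A : Set Z} (hA : MeasurableSet A) : μ[|A] Aᶜ = 0 := by
  simp [cond_apply hA]

/-- On a `Q`-null set the normalised restriction of `Q` is undefined; `P` supplies one. -/
lemma exists_restrict_eq_smul (Q P : Measure Z) [IsFiniteMeasure Q] [IsFiniteMeasure P]
    {A : Set Z} (hA : MeasurableSet A) (hPA : P A ≠ 0) :
    ∃ Q' : Measure Z, IsProbabilityMeasure Q' ∧ Q' Aᶜ = 0 ∧ Q.restrict A = Q A • Q' := by
  rcases eq_or_ne (Q A) 0 with hQA | hQA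
  · exact ⟨P[|A], cond_isProbabilityMeasure hPA, cond_compl_eq_zero P hA,
      by simp [hQA, Measure.restrict_eq_zero.mpr hQA]⟩
  · exact ⟨Q[|A], cond_isProbabilityMeasure hQA, cond_compl_eq_zero Q hA,
      (measure_smul_cond Q A).symm⟩

end Conditioning

section Partition

variable {Z ι : Type*} [MeasurableSpace Z] [Fintype ι] {E : ι → Set Z}

lemma one_sub_hellinger_sq_eq_sum (hE : ∀ i, MeasurableSet (E i))
    (hdisj : Pairwise (Function.onFun Disjoint E)) (hcover : ⋃ i, E i = Set.univ)
    (P Q : Measure Z) [IsProbabilityMeasure P] [IsProbabilityMeasure Q]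
    (P' Q' : ι → Measure Z) [∀ i, IsProbabilityMeasure (P' i)]
    [∀ i, IsProbabilityMeasure (Q' i)]
    (hP : ∀ i, P.restrict (E i) = P (E i) • P' i)
    (hQ : ∀ i, Q.restrict (E i) = Q (E i) • Q' i) :
    1 - hellinger P Q ^ 2 = ∑ i, Real.sqrt ((P (E i)).toReal * (Q (E i)).toReal)
      * (1 - hellinger (P' i) (Q' i) ^ 2) := by
  simp_rw [hellinger_sq, sub_sub_cancel]
  rw [bhattacharyya, ← setIntegral_univ, ← hcover,
    integral_iUnion_fintype hE hdisj fun i => (integrable_geomMeanDensity P Q _).integrableOn]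
  exact Finset.sum_congr rfl fun i _ =>
    setIntegral_geomMeanDensity_eq P Q (hE i) _ _ (hP i) (hQ i)

lemma integral_eq_sum_of_restrict_eq_smul (hE : ∀ i, MeasurableSet (E i))
    (hdisj : Pairwise (Function.onFun Disjoint E)) (hcover : ⋃ i, E i = Set.univ)
    (μ : Measure Z) (μ' : ι → Measure Z) (hμ : ∀ i, μ.restrict (E i) = μ (E i) • μ' i)
    {F : Z → ℝ} (hF : Integrable F μ) :
    ∫ z, F z ∂μ = ∑ i, (μ (E i)).toReal * ∫ z, F z ∂(μ' i) := by
  rw [← setIntegral_univ, ← hcover, integral_iUnion_fintype hE hdisj fun i => hF.integrableOn]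
  simp [hμ, integral_smul_measure]

noncomputable def mixture (w : ι → ℝ) (μ : ι → Measure Z) : Measure Z :=
  ∑ i, ENNReal.ofReal (w i) • μ i

lemma isProbabilityMeasure_mixture {w : ι → ℝ} (hw : ∀ i, 0 ≤ w i) (hw1 : ∑ i, w i = 1)
    (μ : ι → Measure Z) [∀ i, IsProbabilityMeasure (μ i)] :
    IsProbabilityMeasure (mixture w μ) := by
  constructor
  simp [mixture, ← ENNReal.ofReal_sum_of_nonneg fun i _ => hw i, hw1]

lemma integral_mixture {w : ι → ℝ} (hw : ∀ i, 0 ≤ w i) (μ : ι → Measure Z)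
    {F : Z → ℝ} (hF : ∀ i, Integrable F (μ i)) :
    ∫ z, F z ∂(mixture w μ) = ∑ i, w i * ∫ z, F z ∂(μ i) := by
  rw [mixture, integral_finsetSum_measure fun i _ => (hF i).smul_measure ENNReal.ofReal_ne_top]
  simp [integral_smul_measure, ENNReal.toReal_ofReal (hw _)]

lemma restrict_mixture (hdisj : Pairwise (Function.onFun Disjoint E)) (w : ι → ℝ)
    (μ : ι → Measure Z) (hμ : ∀ i, μ i (E i)ᶜ = 0) (j : ι) :
    (mixture w μ).restrict (E j) = ENNReal.ofReal (w j) • μ j := by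
  classical
  have hres : ∀ i, (μ i).restrict (E j) = if i = j then μ j else 0 := fun i => by
    split_ifs with hij
    · subst hij
      exact Measure.restrict_eq_self_of_ae_mem (mem_ae_iff.mpr (hμ i))
    · exact Measure.restrict_eq_zero.mpr
        (measure_mono_null (Set.subset_compl_iff_disjoint_left.mpr (hdisj hij)) (hμ i))
  rw [mixture, ← Measure.restrictₗ_apply, map_sum]
  simp [Measure.restrictₗ_apply, hres]

lemma mixture_apply_eq (hdisj : Pairwise (Function.onFun Disjoint E)) (w : ι → ℝ)
    (μ : ι → Measure Z) [∀ i, IsProbabilityMeasure (μ i)] (hμ : ∀ i, μ i (E i)ᶜ = 0) (j : ι) :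
    mixture w μ (E j) = ENNReal.ofReal (w j) := by
  rw [← Measure.restrict_apply_univ, restrict_mixture hdisj w μ hμ]
  simp

end Partition

section Subpopulation

variable {X : Type*} {S C : ℕ} {xs : X → Fin S}

lemma pairwise_disjoint_subpop :
    Pairwise (Function.onFun Disjoint fun i : Fin S × Fin C => subpop xs i.1 i.2) := by
  intro i j hij
  refine Set.disjoint_left.mpr fun p hi hj => hij ?_
  exact Prod.ext (hi.1.symm.trans hj.1) (hi.2.symm.trans hj.2)

lemma iUnion_subpop : ⋃ i : Fin S × Fin C, subpop xs i.1 i.2 = Set.univ :=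
  Set.eq_univ_of_forall fun p => Set.mem_iUnion.mpr ⟨(xs p.1, p.2), rfl, rfl⟩

variable [MeasurableSpace X]

lemma measurableSet_group (hxs : Measurable xs) (s : Fin S) :
    MeasurableSet {p : X × Fin C | xs p.1 = s} :=
  (hxs.comp measurable_fst) (measurableSet_singleton s)

lemma measurableSet_label (y : Fin C) : MeasurableSet {p : X × Fin C | p.2 = y} :=
  measurable_snd (measurableSet_singleton y)

lemma measurableSet_subpop (hxs : Measurable xs) (s : Fin S) (y : Fin C) :
    MeasurableSet (subpop xs s y) :=
  (measurableSet_group hxs s).inter (measurableSet_label y)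

lemma sum_measure_group (hxs : Measurable xs) (Q : Measure (X × Fin C)) :
    ∑ s, Q {p | xs p.1 = s} = Q Set.univ := by
  have := sum_measure_preimage_singleton (μ := Q) (f := fun p : X × Fin C => xs p.1)
    Finset.univ fun s _ => measurableSet_group hxs s
  rwa [Finset.coe_univ, Set.preimage_univ] at this

lemma sum_measure_label (Q : Measure (X × Fin C)) :
    ∑ y, Q {p : X × Fin C | p.2 = y} = Q Set.univ := by
  have := sum_measure_preimage_singleton (μ := Q) (f := fun p : X × Fin C => p.2)
    Finset.univ fun y _ => measurableSet_label y
  rwa [Finset.coe_univ, Set.preimage_univ] at this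

lemma measure_group_eq_sum (Q : Measure (X × Fin C)) (s : Fin S) :
    Q {p | xs p.1 = s} = ∑ y, Q (subpop xs s y) := by
  have := sum_measure_label (Q.restrict {p | xs p.1 = s})
  simp only [Measure.restrict_apply (measurableSet_label _), Measure.restrict_apply_univ,
    Set.inter_comm] at this
  exact this.symm

lemma measure_label_eq_sum (hxs : Measurable xs) (Q : Measure (X × Fin C)) (y : Fin C) :
    Q {p | p.2 = y} = ∑ s, Q (subpop xs s y) := by
  have := sum_measure_group hxs (Q.restrict {p | p.2 = y})
  simp only [Measure.restrict_apply (measurableSet_group hxs _),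
    Measure.restrict_apply_univ] at this
  exact this.symm

lemma IsFairBaseRate.measure_subpop_eq_mul (hxs : Measurable xs) {Q : Measure (X × Fin C)}
    [IsProbabilityMeasure Q] (hQ : IsFairBaseRate xs Q) (s : Fin S) (y : Fin C) :
    Q (subpop xs s y) = Q {p | xs p.1 = s} * Q {p | p.2 = y} := by
  have hinter : ∀ t, Q (subpop xs t y) = Q[{p | p.2 = y} | {p | xs p.1 = t}] * Q {p | xs p.1 = t} :=
    fun t => (cond_mul_eq_inter (measurableSet_group hxs t) _ Q).symm
  have hlabel : Q {p | p.2 = y} = Q[{p | p.2 = y} | {p | xs p.1 = s}] := by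
    have hfair : ∀ t, Q[{p | p.2 = y} | {p | xs p.1 = t}] = Q[{p | p.2 = y} | {p | xs p.1 = s}] :=
      fun t => hQ y t s
    rw [measure_label_eq_sum hxs Q y]
    simp_rw [hinter, hfair]
    rw [← Finset.mul_sum, sum_measure_group hxs, measure_univ, mul_one]
  rw [hinter, hlabel, mul_comm]

lemma isFairBaseRate_of_measure_subpop_eq_mul (hxs : Measurable xs) (Q : Measure (X × Fin C))
    (k : Fin S → ℝ≥0∞) (b : Fin C → ℝ≥0∞) (hk : ∀ s, k s ≠ 0) (hk' : ∀ s, k s ≠ ∞)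
    (hb : ∑ y, b y = 1) (hQ : ∀ s y, Q (subpop xs s y) = k s * b y) :
    IsFairBaseRate xs Q := by
  have hcond : ∀ s y, Q[{p | p.2 = y} | {p | xs p.1 = s}] = b y := fun s y => by
    rw [cond_apply (measurableSet_group hxs s), measure_group_eq_sum]
    change (∑ y', Q (subpop xs s y'))⁻¹ * Q (subpop xs s y) = b y
    simp_rw [hQ, ← Finset.mul_sum, hb, mul_one]
    rw [← mul_assoc, ENNReal.inv_mul_cancel (hk s) (hk' s), one_mul]
  exact fun y i j => by rw [hcond, hcond]

end Subpopulation

lemma sum_le_sum_of_one_sub_mul_le {ι : Type*} [Fintype ι] {f g : ι → ℝ} {ε : ℝ} (i₀ : ι)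
    (hfg : ∀ i, (1 - ε) * f i ≤ g i) (hf : f i₀ = 0) (hε : ε * ∑ i, f i ≤ g i₀) :
    ∑ i, f i ≤ ∑ i, g i := by
  classical
  have hrest : (1 - ε) * ∑ i, f i ≤ ∑ i ∈ Finset.univ.erase i₀, g i := by
    rw [Finset.mul_sum, ← Finset.add_sum_erase _ _ (Finset.mem_univ i₀), hf, mul_zero, zero_add]
    exact Finset.sum_le_sum fun i _ => hfg i
  rw [← Finset.add_sum_erase Finset.univ g (Finset.mem_univ i₀)]
  linarith

lemma one_sub_mul_sqrt_mul_le {ε p k k' r t a : ℝ} (hε₀ : 0 ≤ ε) (hε : ε ≤ 1) (hp : 0 ≤ p)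
    (hk : 0 ≤ k) (hr : 0 ≤ r) (hk' : (1 - ε) * k ≤ k') (ht : 0 ≤ t) (hta : t ≤ a) :
    (1 - ε) * (Real.sqrt (p * k * r) * t) ≤ Real.sqrt (p * k' * r) * a := by
  have hε' : 0 ≤ 1 - ε := by linarith
  calc (1 - ε) * (Real.sqrt (p * k * r) * t) = Real.sqrt ((1 - ε) ^ 2 * (p * k * r)) * t := by
        rw [Real.sqrt_mul (sq_nonneg _), Real.sqrt_sq hε']; ring
    _ ≤ Real.sqrt (p * k' * r) * a := by
        refine mul_le_mul (Real.sqrt_le_sqrt ?_) hta ht (Real.sqrt_nonneg _)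
        calc (1 - ε) ^ 2 * (p * k * r) ≤ (1 - ε) * (p * k * r) :=
              mul_le_mul_of_nonneg_right (by nlinarith) (by positivity)
          _ = p * ((1 - ε) * k) * r := by ring
          _ ≤ p * k' * r := by gcongr

lemma sum_sqrt_mul_le_sum_sqrt_mul {S C : ℕ} {p t a : Fin S → Fin C → ℝ} {k k' : Fin S → ℝ}
    {r : Fin C → ℝ} {ε : ℝ} (hε₀ : 0 ≤ ε) (hε₁ : ε ≤ 1) (hp : ∀ s y, 0 ≤ p s y)
    (hk : ∀ s, 0 ≤ k s) (hr : ∀ y, 0 ≤ r y) (hk' : ∀ s, (1 - ε) * k s ≤ k' s)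
    (ht : ∀ s y, 0 ≤ t s y) (hta : ∀ s y, t s y ≤ a s y) {s₀ : Fin S} {y₀ : Fin C}
    (hs₀ : k s₀ = 0)
    (hgain : ε * ∑ s, ∑ y, Real.sqrt (p s y * k s * r y) * t s y
      ≤ Real.sqrt (p s₀ y₀ * k' s₀ * r y₀) * a s₀ y₀) :
    ∑ s, ∑ y, Real.sqrt (p s y * k s * r y) * t s y
      ≤ ∑ s, ∑ y, Real.sqrt (p s y * k' s * r y) * a s y := by
  simp only [← Fintype.sum_prod_type'] at hgain ⊢
  exact sum_le_sum_of_one_sub_mul_le (s₀, y₀)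
    (fun i => one_sub_mul_sqrt_mul_le hε₀ hε₁ (hp _ _) (hk _) (hr _) (hk' _) (ht _ _) (hta _ _))
    (by simp [hs₀]) hgain

lemma one_sub_mul_sum_le_sum {S C : ℕ} {k k' : Fin S → ℝ} {r : Fin C → ℝ}
    {v v' : Fin S → Fin C → ℝ} {ε : ℝ} (hr : ∀ y, 0 ≤ r y) (hk' : ∀ s, (1 - ε) * k s ≤ k' s)
    (hk'₀ : ∀ s, 0 ≤ k' s) (hv' : ∀ s y, 0 ≤ v' s y) (hvv' : ∀ s y, k s ≠ 0 → v' s y = v s y) :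
    (1 - ε) * ∑ s, ∑ y, k s * r y * v s y ≤ ∑ s, ∑ y, k' s * r y * v' s y := by
  simp only [Finset.mul_sum]
  refine Finset.sum_le_sum fun s _ => Finset.sum_le_sum fun y _ => ?_
  by_cases h : k s = 0
  · simpa [h] using mul_nonneg (mul_nonneg (hk'₀ s) (hr y)) (hv' s y)
  · rw [← hvv' s y h, ← mul_assoc, ← mul_assoc]
    exact mul_le_mul_of_nonneg_right (mul_le_mul_of_nonneg_right (hk' s) (hr y)) (hv' s y)

lemma exists_pos_mul_le_sqrt {c δ : ℝ} (hc : 0 < c) (hδ : 0 < δ) (T L : ℝ) :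
    ∃ ε, 0 < ε ∧ ε ≤ 1 ∧ ε * T ≤ Real.sqrt (c * ε) ∧ ε * L ≤ δ := by
  have hlim : ∀ a : ℝ, Filter.Tendsto (fun ε : ℝ => ε * a) (nhds 0) (nhds 0) := fun a => by
    simpa using (Filter.tendsto_id (x := nhds (0 : ℝ))).mul_const a
  obtain ⟨ε, ⟨⟨hεT, hεL⟩, hε1⟩, hε0⟩ :=
    ((((hlim (T ^ 2)).eventually_lt_const hc).and ((hlim L).eventually_lt_const hδ)).and
      (eventually_lt_nhds one_pos) |>.filter_mono nhdsWithin_le_nhds |>.and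
      (self_mem_nhdsWithin (s := Set.Ioi (0 : ℝ)))).exists
  refine ⟨ε, hε0, hε1.le, (le_abs_self _).trans (Real.abs_le_sqrt ?_), hεL.le⟩
  have hε0 : (0 : ℝ) < ε := hε0
  nlinarith

lemma csSup_eq_csSup_of_subset_of_forall_sub_le {A B : Set ℝ} (hAB : A ⊆ B) (hB : BddAbove B)
    (h : ∀ b ∈ B, ∀ δ > 0, ∃ a ∈ A, b - δ ≤ a) : sSup A = sSup B := by
  rcases B.eq_empty_or_nonempty with rfl | ⟨b₀, hb₀⟩
  · rw [Set.subset_empty_iff.mp hAB]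
  obtain ⟨a₀, ha₀, -⟩ := h b₀ hb₀ 1 one_pos
  refine le_antisymm (csSup_le_csSup hB ⟨a₀, ha₀⟩ hAB)
    (csSup_le ⟨b₀, hb₀⟩ fun b hb => le_of_forall_pos_le_add fun δ hδ => ?_)
  obtain ⟨a, ha, hba⟩ := h b hb δ hδ
  linarith [le_csSup (hB.mono hAB) ha]

section Risks

variable {X : Type*} [MeasurableSpace X] {S C : ℕ} (xs : X → Fin S) (P : Measure (X × Fin C))
  (F : X × Fin C → ℝ) (ρ : ℝ)

def fairRisks : Set ℝ :=
  {L | ∃ Q : Measure (X × Fin C), IsProbabilityMeasure Q ∧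
    IsFairBaseRate xs Q ∧ hellinger P Q ≤ ρ ∧ L = ∫ p, F p ∂Q}

def decomposedRisks : Set ℝ :=
  {L | ∃ (k : Fin S → ℝ) (r : Fin C → ℝ)
    (Qs : Fin S → Fin C → Measure (X × Fin C)) (ρs : Fin S → Fin C → ℝ),
    (∀ s, 0 ≤ k s) ∧ (∀ y, 0 ≤ r y) ∧ (∑ s, k s = 1) ∧ (∑ y, r y = 1) ∧
    (∀ s y, IsProbabilityMeasure (Qs s y)) ∧
    (∀ s y, Qs s y (subpop xs s y)ᶜ = 0) ∧
    (∀ s y, 0 ≤ ρs s y ∧ ρs s y ≤ 1) ∧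
    (∀ s y, hellinger (P[|subpop xs s y]) (Qs s y) ≤ ρs s y) ∧
    1 - ρ ^ 2 ≤ ∑ s, ∑ y,
      Real.sqrt ((P (subpop xs s y)).toReal * k s * r y) * (1 - ρs s y ^ 2) ∧
    L = ∑ s, ∑ y, k s * r y * ∫ p, F p ∂(Qs s y)}

variable {xs P F ρ}

lemma fairRisks_subset_decomposedRisks (hxs : Measurable xs) [IsProbabilityMeasure P]
    (hpos : ∀ s y, P (subpop xs s y) ≠ 0)
    (hF : ∀ (Q : Measure (X × Fin C)) [IsFiniteMeasure Q], Integrable F Q) :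
    fairRisks xs P F ρ ⊆ decomposedRisks xs P F ρ := by
  rintro L ⟨Q, hQ, hfair, hPQ, rfl⟩
  choose Qs hQs hsupp hrestr using fun s y =>
    exists_restrict_eq_smul Q P (measurableSet_subpop hxs s y) (hpos s y)
  have := fun s y => cond_isProbabilityMeasure (hpos s y)
  have hkr : ∀ s y, (P (subpop xs s y)).toReal * (Q {p | xs p.1 = s}).toReal
      * (Q {p | p.2 = y}).toReal = (P (subpop xs s y)).toReal * (Q (subpop xs s y)).toReal :=
    fun s y => by rw [hfair.measure_subpop_eq_mul hxs, ENNReal.toReal_mul, mul_assoc]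
  have hdisj := pairwise_disjoint_subpop (xs := xs) (C := C)
  have hmeas := fun i : Fin S × Fin C => measurableSet_subpop hxs i.1 i.2
  refine ⟨fun s => (Q {p | xs p.1 = s}).toReal, fun y => (Q {p | p.2 = y}).toReal, Qs,
    fun s y => hellinger (P[|subpop xs s y]) (Qs s y), fun _ => ENNReal.toReal_nonneg,
    fun _ => ENNReal.toReal_nonneg, ?_, ?_, hQs, hsupp,
    fun s y => ⟨hellinger_nonneg _ _, hellinger_le_one _ _⟩, fun _ _ => le_rfl, ?_, ?_⟩
  · rw [← ENNReal.toReal_sum fun _ _ => measure_ne_top _ _, sum_measure_group hxs, measure_univ,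
      ENNReal.toReal_one]
  · rw [← ENNReal.toReal_sum fun _ _ => measure_ne_top _ _, sum_measure_label, measure_univ,
      ENNReal.toReal_one]
  · have hdec := one_sub_hellinger_sq_eq_sum hmeas hdisj iUnion_subpop P Q
      (fun i => P[|subpop xs i.1 i.2]) (fun i => Qs i.1 i.2)
      (fun i => (measure_smul_cond P _).symm) (fun i => hrestr i.1 i.2)
    rw [Fintype.sum_prod_type] at hdec
    simp_rw [hkr, ← hdec]
    nlinarith [hellinger_nonneg P Q]
  · rw [integral_eq_sum_of_restrict_eq_smul hmeas hdisj iUnion_subpop Q (fun i => Qs i.1 i.2)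
      (fun i => hrestr i.1 i.2) (hF Q), Fintype.sum_prod_type]
    simp_rw [hfair.measure_subpop_eq_mul hxs, ENNReal.toReal_mul]

lemma mem_fairRisks_of_pos (hxs : Measurable xs) [IsProbabilityMeasure P]
    (hpos : ∀ s y, P (subpop xs s y) ≠ 0)
    (hF : ∀ (Q : Measure (X × Fin C)) [IsFiniteMeasure Q], Integrable F Q) (hρ : 0 ≤ ρ)
    {k : Fin S → ℝ} {r : Fin C → ℝ} (hk : ∀ s, 0 < k s) (hr : ∀ y, 0 ≤ r y)
    (hk₁ : ∑ s, k s = 1) (hr₁ : ∑ y, r y = 1) (Qs : Fin S → Fin C → Measure (X × Fin C))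
    [∀ s y, IsProbabilityMeasure (Qs s y)] (hsupp : ∀ s y, Qs s y (subpop xs s y)ᶜ = 0)
    (hH : 1 - ρ ^ 2 ≤ ∑ s, ∑ y, Real.sqrt ((P (subpop xs s y)).toReal * k s * r y)
      * (1 - hellinger (P[|subpop xs s y]) (Qs s y) ^ 2)) :
    ∑ s, ∑ y, k s * r y * ∫ p, F p ∂(Qs s y) ∈ fairRisks xs P F ρ := by
  set w : Fin S × Fin C → ℝ := fun i => k i.1 * r i.2
  set μ : Fin S × Fin C → Measure (X × Fin C) := fun i => Qs i.1 i.2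
  have hw : ∀ i, 0 ≤ w i := fun i => mul_nonneg (hk i.1).le (hr i.2)
  have := isProbabilityMeasure_mixture hw (by simp [w, Fintype.sum_prod_type, ← Finset.mul_sum,
    hr₁, hk₁]) μ
  have := fun s y => cond_isProbabilityMeasure (hpos s y)
  have hdisj := pairwise_disjoint_subpop (xs := xs) (C := C)
  have hmix : ∀ i, mixture w μ (subpop xs i.1 i.2) = ENNReal.ofReal (w i) :=
    mixture_apply_eq hdisj w μ fun i => hsupp i.1 i.2
  refine ⟨mixture w μ, inferInstance, ?_, ?_, ?_⟩
  · refine isFairBaseRate_of_measure_subpop_eq_mul hxs _ (fun s => ENNReal.ofReal (k s))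
      (fun y => ENNReal.ofReal (r y)) (fun s => by simp [hk s]) (fun _ => ENNReal.ofReal_ne_top)
      (by rw [← ENNReal.ofReal_sum_of_nonneg fun y _ => hr y, hr₁, ENNReal.ofReal_one])
      fun s y => ?_
    rw [hmix (s, y), ENNReal.ofReal_mul (hk s).le]
  · have hdec := one_sub_hellinger_sq_eq_sum (fun i => measurableSet_subpop hxs i.1 i.2) hdisj
      iUnion_subpop P (mixture w μ) (fun i => P[|subpop xs i.1 i.2]) μ
      (fun i => (measure_smul_cond P (subpop xs i.1 i.2)).symm)
      (fun i => by rw [restrict_mixture hdisj w μ (fun i => hsupp i.1 i.2), hmix])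
    simp only [hmix, ENNReal.toReal_ofReal (hw _), Fintype.sum_prod_type, w, μ, ← mul_assoc]
      at hdec
    rw [← pow_le_pow_iff_left₀ (hellinger_nonneg _ _) hρ two_ne_zero]
    linarith
  · rw [integral_mixture hw μ fun i => hF _, Fintype.sum_prod_type]

lemma exists_mem_fairRisks_ge_of_eq_zero (hxs : Measurable xs) [IsProbabilityMeasure P]
    (hpos : ∀ s y, P (subpop xs s y) ≠ 0)
    (hF : ∀ (Q : Measure (X × Fin C)) [IsFiniteMeasure Q], Integrable F Q) (hF₀ : ∀ p, 0 ≤ F p)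
    (hρ : 0 ≤ ρ) {k : Fin S → ℝ} {r : Fin C → ℝ} (hk : ∀ s, 0 ≤ k s) (hr : ∀ y, 0 ≤ r y)
    (hk₁ : ∑ s, k s = 1) (hr₁ : ∑ y, r y = 1) {Qs : Fin S → Fin C → Measure (X × Fin C)}
    [∀ s y, IsProbabilityMeasure (Qs s y)] (hsupp : ∀ s y, Qs s y (subpop xs s y)ᶜ = 0)
    {ρs : Fin S → Fin C → ℝ} (hρs : ∀ s y, 0 ≤ ρs s y ∧ ρs s y ≤ 1)
    (hHρs : ∀ s y, hellinger (P[|subpop xs s y]) (Qs s y) ≤ ρs s y)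
    (hT : 1 - ρ ^ 2 ≤ ∑ s, ∑ y,
      Real.sqrt ((P (subpop xs s y)).toReal * k s * r y) * (1 - ρs s y ^ 2))
    {s₀ : Fin S} (hs₀ : k s₀ = 0) {δ : ℝ} (hδ : 0 < δ) :
    ∃ L ∈ fairRisks xs P F ρ, ∑ s, ∑ y, k s * r y * ∫ p, F p ∂(Qs s y) - δ ≤ L := by
  set mass : Fin S → Fin C → ℝ := fun s y => (P (subpop xs s y)).toReal
  have hmass : ∀ s y, 0 < mass s y := fun s y =>
    ENNReal.toReal_pos (hpos s y) (measure_ne_top _ _)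
  have := fun s y => cond_isProbabilityMeasure (hpos s y)
  obtain ⟨y₀, -, hy₀⟩ := Finset.exists_ne_zero_of_sum_ne_zero (hr₁.trans_ne one_ne_zero)
  have hS : (0 : ℝ) < S := Nat.cast_pos.mpr (Fin.pos s₀)
  obtain ⟨ε, hε₀, hε₁, hεT, hεL⟩ := exists_pos_mul_le_sqrt
    (div_pos (mul_pos (hmass s₀ y₀) ((hr y₀).lt_of_ne' hy₀)) hS) hδ
    (∑ s, ∑ y, Real.sqrt (mass s y * k s * r y) * (1 - ρs s y ^ 2))
    (∑ s, ∑ y, k s * r y * ∫ p, F p ∂(Qs s y))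
  set k' : Fin S → ℝ := fun s => (1 - ε) * k s + ε / S
  have hk'₀ : ∀ s, 0 < k' s := fun s =>
    add_pos_of_nonneg_of_pos (mul_nonneg (by linarith) (hk s)) (by positivity)
  have hk' : ∀ s, (1 - ε) * k s ≤ k' s := fun s => le_add_of_nonneg_right (by positivity)
  set Qs' : Fin S → Fin C → Measure (X × Fin C) :=
    fun s y => if k s = 0 then P[|subpop xs s y] else Qs s y
  have hQs' : ∀ s y, IsProbabilityMeasure (Qs' s y) := fun s y => by
    by_cases h : k s = 0 <;> simp only [Qs', h, if_true, if_false] <;> infer_instance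
  have hρs' : ∀ s y, 1 - ρs s y ^ 2 ≤ 1 - hellinger (P[|subpop xs s y]) (Qs' s y) ^ 2 :=
    fun s y => by
      by_cases h : k s = 0
      · simp [Qs', h, sq_nonneg]
      · simp only [Qs', h, if_false]
        nlinarith [hellinger_nonneg (P[|subpop xs s y]) (Qs s y), hHρs s y]
  refine ⟨_, mem_fairRisks_of_pos hxs hpos hF hρ hk'₀ hr ?_ hr₁ Qs' (fun s y => ?_)
    (hT.trans (sum_sqrt_mul_le_sum_sqrt_mul hε₀.le hε₁ (fun s y => (hmass s y).le) hk hr hk'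
      (fun s y => by nlinarith [hρs s y]) hρs' (y₀ := y₀) hs₀ ?_)), ?_⟩
  · simp [k', Finset.sum_add_distrib, ← Finset.mul_sum, hk₁]
    field_simp
    ring
  · by_cases h : k s = 0
    · simp [Qs', h, cond_compl_eq_zero _ (measurableSet_subpop hxs s y)]
    · simp [Qs', h, hsupp]
  · convert hεT using 1
    simp only [k', Qs', mass, hs₀, if_true, hellinger_self]
    ring_nf
  · have := one_sub_mul_sum_le_sum (v := fun s y => ∫ p, F p ∂(Qs s y))
      (v' := fun s y => ∫ p, F p ∂(Qs' s y)) hr hk' (fun s => (hk'₀ s).le)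
      (fun s y => integral_nonneg hF₀) (fun s y h => by simp [Qs', h])
    nlinarith

lemma exists_mem_fairRisks_ge (hxs : Measurable xs) [IsProbabilityMeasure P]
    (hpos : ∀ s y, P (subpop xs s y) ≠ 0)
    (hF : ∀ (Q : Measure (X × Fin C)) [IsFiniteMeasure Q], Integrable F Q) (hF₀ : ∀ p, 0 ≤ F p)
    (hρ : 0 ≤ ρ) {L : ℝ} (hL : L ∈ decomposedRisks xs P F ρ) {δ : ℝ} (hδ : 0 < δ) :
    ∃ L' ∈ fairRisks xs P F ρ, L - δ ≤ L' := by
  obtain ⟨k, r, Qs, ρs, hk, hr, hk₁, hr₁, hQs, hsupp, hρs, hHρs, hT, rfl⟩ := hL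
  by_cases hkpos : ∀ s, 0 < k s
  · refine ⟨_, mem_fairRisks_of_pos hxs hpos hF hρ hkpos hr hk₁ hr₁ Qs hsupp (hT.trans ?_),
      by linarith⟩
    gcongr with s _ y
    exacts [hellinger_nonneg _ _, hHρs s y]
  · obtain ⟨s₀, hs₀⟩ := not_forall.mp hkpos
    exact exists_mem_fairRisks_ge_of_eq_zero hxs hpos hF hF₀ hρ hk hr hk₁ hr₁ hsupp hρs hHρs hT
      ((hk s₀).antisymm (not_lt.mp hs₀)).symm hδ

lemma bddAbove_decomposedRisks
    (hF : ∀ (Q : Measure (X × Fin C)) [IsFiniteMeasure Q], Integrable F Q) {M : ℝ}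
    (hM : ∀ p, F p ≤ M) : BddAbove (decomposedRisks xs P F ρ) := by
  refine ⟨M, ?_⟩
  rintro _ ⟨k, r, Qs, ρs, hk, hr, hk₁, hr₁, hQs, -, -, -, -, rfl⟩
  calc ∑ s, ∑ y, k s * r y * ∫ p, F p ∂(Qs s y) ≤ ∑ s, ∑ y, k s * r y * M := by
        gcongr with s _ y
        · exact mul_nonneg (hk s) (hr y)
        · simpa using integral_mono (hF (Qs s y)) (integrable_const M) hM
    _ = M := by simp [← Finset.sum_mul, ← Finset.mul_sum, hk₁, hr₁]

theorem sSup_fairRisks_eq_sSup_decomposedRisks (hxs : Measurable xs) [IsProbabilityMeasure P]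
    (hpos : ∀ s y, P (subpop xs s y) ≠ 0)
    (hF : ∀ (Q : Measure (X × Fin C)) [IsFiniteMeasure Q], Integrable F Q) (hF₀ : ∀ p, 0 ≤ F p)
    {M : ℝ} (hM : ∀ p, F p ≤ M) (hρ : 0 ≤ ρ) :
    sSup (fairRisks xs P F ρ) = sSup (decomposedRisks xs P F ρ) :=
  csSup_eq_csSup_of_subset_of_forall_sub_le (fairRisks_subset_decomposedRisks hxs hpos hF)
    (bddAbove_decomposedRisks hF hM) fun _ hL _ hδ =>
      exists_mem_fairRisks_ge hxs hpos hF hF₀ hρ hL hδ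

end Risks

/-- tight fairness certificate under general shifting.
`P` is a probability distribution on `X × Fin C` with all subpopulation probabilities
`p_{s,y} = Pr_P[X_s = s, Y = y]` positive, `h` a classifier and `ℓ` a nonnegative loss.
For any `ρ > 0`, the supremum of the expected loss over all fair base rate distributions `Q`
with `H(P,Q) ≤ ρ` equals the supremum of `Σ_{s,y} k_s r_y E_{Q_{s,y}}[ℓ(h(X),Y)]` over all
nonnegative `k, r` summing to one, probability distributions `Q_{s,y}` supported on the
subpopulation `{(x,y') : x_s = s, y' = y}`, and `ρ_{s,y} ∈ [0,1]` with
`H(P_{s,y}, Q_{s,y}) ≤ ρ_{s,y}` and `Σ_{s,y} √(p_{s,y} k_s r_y)(1 − ρ_{s,y}²) ≥ 1 − ρ²`. -/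
theorem statement_8 {X : Type*} [MeasurableSpace X] {S C : ℕ}
    (xs : X → Fin S) (hxs : Measurable xs)
    (P : Measure (X × Fin C)) [IsProbabilityMeasure P]
    (hpos : ∀ s y, 0 < P (subpop xs s y))
    (h : X → Fin C) (hh : Measurable h)
    (ℓ : Fin C → Fin C → ℝ) (hℓ : ∀ a b, 0 ≤ ℓ a b)
    (ρ : ℝ) (hρ : 0 < ρ) :
    let A : Set ℝ := {L | ∃ Q : Measure (X × Fin C), IsProbabilityMeasure Q ∧
      IsFairBaseRate xs Q ∧ hellinger P Q ≤ ρ ∧ L = ∫ p, ℓ (h p.1) p.2 ∂Q}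
    let B : Set ℝ := {L | ∃ (k : Fin S → ℝ) (r : Fin C → ℝ)
      (Qs : Fin S → Fin C → Measure (X × Fin C)) (ρs : Fin S → Fin C → ℝ),
      (∀ s, 0 ≤ k s) ∧ (∀ y, 0 ≤ r y) ∧ (∑ s, k s = 1) ∧ (∑ y, r y = 1) ∧
      (∀ s y, IsProbabilityMeasure (Qs s y)) ∧
      (∀ s y, Qs s y (subpop xs s y)ᶜ = 0) ∧
      (∀ s y, 0 ≤ ρs s y ∧ ρs s y ≤ 1) ∧
      (∀ s y, hellinger (P[|subpop xs s y]) (Qs s y) ≤ ρs s y) ∧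
      1 - ρ ^ 2 ≤ ∑ s, ∑ y,
        Real.sqrt ((P (subpop xs s y)).toReal * k s * r y) * (1 - ρs s y ^ 2) ∧
      L = ∑ s, ∑ y, k s * r y * ∫ p, ℓ (h p.1) p.2 ∂(Qs s y)}
    sSup A = sSup B := by
  intro A B
  obtain ⟨M, hM⟩ := (Set.finite_range (Function.uncurry ℓ)).bddAbove
  have hFm : Measurable fun p : X × Fin C => ℓ (h p.1) p.2 :=
    (measurable_of_countable (Function.uncurry ℓ)).comp
      ((hh.comp measurable_fst).prodMk measurable_snd)
  have hF : ∀ p : X × Fin C, ℓ (h p.1) p.2 ≤ M := fun p => hM ⟨(h p.1, p.2), rfl⟩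
  exact sSup_fairRisks_eq_sSup_decomposedRisks hxs (fun s y => (hpos s y).ne')
    (fun Q _ => .of_bound hFm.aestronglyMeasurable M
      (ae_of_all _ fun p => (Real.norm_of_nonneg (hℓ _ _)).trans_le (hF p)))
    (fun _ => hℓ _ _) hF hρ.le
end
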